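/- arXiv:2212.06248 — 3 statements merged into one kernel-verified Lean document; each statement's English description precedes it below -/
import Mathlib

section
/- Let G be a finite graph with a fixed orientation. An element x ∈ Flow(G) is irreducible (admits no decomposition x = y + z with y, z nonzero in Flow(G) and y · z ≥ 0) if and only if x is the class of an oriented cycle of G. -/
/-- `x : E → ℤ` is a flow: it lies in `ker ∂ ⊆ C₁(G;ℤ)`. -/
def IsFlow {V E : Type} [Fintype E] [DecidableEq V] (src tgt : E → V) (x : E → ℤ) : Prop :=
  ∀ v : V, ∑ e, x e * ((if tgt e = v then 1 else 0) - (if src e = v then 1 else 0)) = 0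

/-- Two edges share a vertex. -/
def SharesVertex {V E : Type} (src tgt : E → V) (a b : E) : Prop :=
  src a = src b ∨ src a = tgt b ∨ tgt a = src b ∨ tgt a = tgt b

/-- The head of an edge `e` in the orientation determined by the sign of `x e`. -/
def flowHead {V E : Type} (src tgt : E → V) (x : E → ℤ) (e : E) : V :=
  if x e = 1 then tgt e else src e

/-- `x` is the class of an oriented cycle of `G`: a nonzero flow with entries in `{-1,0,1}`,
such that each vertex has at most one incoming (equivalently, outgoing) edge of the cycle,
and whose support is connected. -/
def IsCycleClass {V E : Type} [Fintype E] [DecidableEq V] (src tgt : E → V)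
    (x : E → ℤ) : Prop :=
  x ≠ 0 ∧ IsFlow src tgt x ∧ (∀ e, x e = -1 ∨ x e = 0 ∨ x e = 1) ∧
  (∀ v : V, ({e : E | x e ≠ 0 ∧ flowHead src tgt x e = v} : Set E).Subsingleton) ∧
  (∀ a b : E, x a ≠ 0 → x b ≠ 0 →
    Relation.ReflTransGen (fun p q => x p ≠ 0 ∧ x q ≠ 0 ∧ SharesVertex src tgt p q) a b)

/-!
Orient each edge of the support of an integer vector `x` by the sign of `x`. For a flow,
conservation at a vertex says that the `|x|`-weighted in- and out-degrees agree, so every edge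
of the support is followed by another one; walking until a vertex repeats produces an oriented
cycle `c` conformal to `x`. If `x ≠ c`, then `x = c + (x - c)` with
`c · (x - c) = ∑_{c e ≠ 0} (|x e| - 1) ≥ 0`, so an irreducible flow is a cycle class.

Conversely let `x` be a cycle class and `x = y + z` with `y · z ≥ 0`. As the entries of `x` lie
in `{-1, 0, 1}`, every product `y e * z e` is `≤ 0`, hence zero, so `y` is the restriction of `x`
to part of its support. At a vertex the cycle has exactly one incoming and one outgoing edge
(or none), and conservation for `y` puts both or neither of them in the support of `y`. Since the
support of `x` is connected, `y = 0` or `y = x`.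
-/

open Finset

lemma Int.mul_nonpos_of_add_eq {a b c : ℤ} (h : c = -1 ∨ c = 0 ∨ c = 1) (hab : a + b = c) :
    a * b ≤ 0 := by
  obtain rfl : b = c - a := by omega
  rcases h with rfl | rfl | rfl <;> nlinarith [sq_nonneg (a + 1), sq_nonneg a, sq_nonneg (a - 1)]

lemma Finset.imp_of_card_filter_eq {α : Type*} [DecidableEq α] {s t : Finset α} {P : α → Prop}
    [DecidablePred P] (hs : #s ≤ 1) (hst : #s = #t) (hP : #{a ∈ s | P a} = #{a ∈ t | P a})
    {p q : α} (hp : p ∈ s ∪ t) (hq : q ∈ s ∪ t) (hPp : P p) : P q := by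
  have hs1 : #s = 1 := by
    refine hs.antisymm (Nat.one_le_iff_ne_zero.mpr fun h0 => ?_)
    rw [card_eq_zero.mp h0, card_eq_zero.mp (hst ▸ h0 : #t = 0)] at hp
    simp at hp
  obtain ⟨a, rfl⟩ := card_eq_one.mp hs1
  obtain ⟨b, rfl⟩ := card_eq_one.mp (hst ▸ hs1)
  simp only [filter_singleton] at hP
  have hab : P a ↔ P b := by
    by_cases ha : P a <;> by_cases hb : P b <;> simp [ha, hb] at hP ⊢
  simp only [mem_union, mem_singleton] at hp hq
  rcases hp with rfl | rfl <;> rcases hq with rfl | rfl <;> tauto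

theorem exists_simple_closed_walk {α V : Type*} [Finite V] (head tail : α → V)
    (h : ∀ a, ∃ b, tail b = head a) (a₀ : α) :
    ∃ n, 0 < n ∧ ∃ w : ℕ → α, (∀ k, tail (w (k + 1)) = head (w k)) ∧ tail (w n) = tail (w 0) ∧
      ∀ m, Set.InjOn (tail ∘ w) (Set.Ico m (m + n)) := by
  classical
  choose next hnext using h
  set f : ℕ → α := fun k => next^[k] a₀
  have hf : ∀ k, tail (f (k + 1)) = head (f k) := fun k => by
    simp only [f, Function.iterate_succ_apply']
    exact hnext _
  have hrep : ∃ n, 0 < n ∧ ∃ i, tail (f (i + n)) = tail (f i) := by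
    obtain ⟨i, j, hij, heq⟩ := Set.finite_univ.exists_lt_map_eq_of_forall_mem
      (f := tail ∘ f) fun _ => Set.mem_univ _
    exact ⟨j - i, by omega, i, by rw [Nat.add_sub_cancel' hij.le]; exact heq.symm⟩
  -- the shortest return time makes the walk simple
  obtain ⟨hn, i, hi⟩ := Nat.find_spec hrep
  have hne : ∀ k l, k < l → l < k + Nat.find hrep → tail (f (i + k)) ≠ tail (f (i + l)) :=
    fun k l hkl hlk heq => by
      refine Nat.find_min hrep (show l - k < Nat.find hrep by omega) ⟨by omega, i + k, ?_⟩
      rw [show i + k + (l - k) = i + l by omega]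
      exact heq.symm
  refine ⟨Nat.find hrep, hn, fun k => f (i + k), fun k => hf (i + k), hi,
    fun m k hk l hl heq => ?_⟩
  simp only [Set.mem_Ico] at hk hl
  rcases lt_trichotomy k l with hkl | rfl | hkl
  · exact absurd heq (hne k l hkl (by omega))
  · rfl
  · exact absurd heq.symm (hne l k hkl (by omega))

variable {V E : Type}

section Orientation

variable (src tgt : E → V)

/-- Unlike `flowHead`, this orients every edge of the support of an arbitrary integer vector. -/
def signHead (x : E → ℤ) (e : E) : V := if 0 < x e then tgt e else src e

def signTail (x : E → ℤ) (e : E) : V := if 0 < x e then src e else tgt e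

variable {src tgt}

lemma signHead_eq_or_signTail_eq {x : E → ℤ} {e : E} {w : V} (h : src e = w ∨ tgt e = w) :
    signHead src tgt x e = w ∨ signTail src tgt x e = w := by
  unfold signHead signTail
  split_ifs <;> tauto

lemma flowHead_eq_signHead {x : E → ℤ} {e : E} (h : x e = -1 ∨ x e = 0 ∨ x e = 1) :
    flowHead src tgt x e = signHead src tgt x e := by
  unfold flowHead signHead
  rcases h with h | h | h <;> simp [h]

lemma SharesVertex.symm {a b : E} (h : SharesVertex src tgt a b) :
    SharesVertex src tgt b a := by
  unfold SharesVertex at *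
  rcases h with h | h | h | h <;> simp [h]

lemma SharesVertex.exists_common {a b : E} (h : SharesVertex src tgt a b) :
    ∃ w, (src a = w ∨ tgt a = w) ∧ (src b = w ∨ tgt b = w) := by
  rcases h with h | h | h | h
  · exact ⟨src b, .inl h, .inl rfl⟩
  · exact ⟨tgt b, .inl h, .inr rfl⟩
  · exact ⟨src b, .inr h, .inl rfl⟩
  · exact ⟨tgt b, .inr h, .inr rfl⟩

lemma sharesVertex_of_signTail_eq_signHead {x : E → ℤ} {a b : E}
    (h : signTail src tgt x b = signHead src tgt x a) : SharesVertex src tgt a b := by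
  unfold signTail signHead at h
  unfold SharesVertex
  split_ifs at h <;> simp [h]

variable [DecidableEq V]

lemma sign_mul_incidence_eq {x : E → ℤ} {e : E} (he : x e ≠ 0) (w : V) :
    (x e).sign * ((if tgt e = w then 1 else 0) - (if src e = w then 1 else 0)) =
      (if signHead src tgt x e = w then 1 else 0) -
        (if signTail src tgt x e = w then 1 else 0) := by
  unfold signHead signTail
  rcases he.lt_or_gt with h | h
  · simp [Int.sign_eq_neg_one_of_neg h, h.not_gt]
  · simp [Int.sign_eq_one_of_pos h, h]

lemma mul_incidence_eq_abs_mul (x : E → ℤ) (e : E) (w : V) :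
    x e * ((if tgt e = w then 1 else 0) - (if src e = w then 1 else 0)) =
      |x e| * ((if signHead src tgt x e = w then 1 else 0) -
        (if signTail src tgt x e = w then 1 else 0)) := by
  by_cases he : x e = 0
  · simp [he]
  · rw [← sign_mul_incidence_eq he, ← mul_assoc, mul_comm |x e|, Int.sign_mul_abs]

end Orientation

lemma reflTransGen_of_closedWalk {src tgt : E → V} {x c : E → ℤ} {n : ℕ} {a : ℕ → E}
    (hca : ∀ k < n, c (a k) ≠ 0)
    (hstep : ∀ k, signTail src tgt x (a (k + 1)) = signHead src tgt x (a k)) {k l : ℕ}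
    (hk : k < n) (hl : l < n) :
    Relation.ReflTransGen (fun p q => c p ≠ 0 ∧ c q ≠ 0 ∧ SharesVertex src tgt p q)
      (a k) (a l) := by
  refine Relation.ReflTransGen.lift a (fun _ _ h => h) _ _ (reflTransGen_of_succ
    (fun i j => c (a i) ≠ 0 ∧ c (a j) ≠ 0 ∧ SharesVertex src tgt (a i) (a j)) ?_ ?_)
  · intro i hi
    simp only [Set.mem_Ico, Order.succ_eq_add_one] at hi ⊢
    exact ⟨hca i (by omega), hca (i + 1) (by omega),
      sharesVertex_of_signTail_eq_signHead (hstep i)⟩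
  · intro i hi
    simp only [Set.mem_Ico, Order.succ_eq_add_one] at hi ⊢
    exact ⟨hca (i + 1) (by omega), hca i (by omega),
      (sharesVertex_of_signTail_eq_signHead (hstep i)).symm⟩

section Flow

variable [Fintype E] [DecidableEq V] {src tgt : E → V} {x y : E → ℤ}

lemma IsFlow.sub (hx : IsFlow src tgt x) (hy : IsFlow src tgt y) : IsFlow src tgt (x - y) := by
  intro v
  simp only [Pi.sub_apply, sub_mul, sum_sub_distrib, hx v, hy v, sub_zero]

lemma IsFlow.sum_abs_signHead_eq (hx : IsFlow src tgt x) (w : V) :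
    ∑ e with signHead src tgt x e = w, |x e| = ∑ e with signTail src tgt x e = w, |x e| := by
  have h := hx w
  rw [sum_congr rfl fun e _ => mul_incidence_eq_abs_mul x e w] at h
  simp only [mul_sub, mul_ite, mul_one, mul_zero, sum_sub_distrib, sub_eq_zero] at h
  rwa [sum_filter, sum_filter]

lemma IsFlow.exists_signTail_eq_signHead (hx : IsFlow src tgt x) {e : E} (he : x e ≠ 0) :
    ∃ e', x e' ≠ 0 ∧ signTail src tgt x e' = signHead src tgt x e := by
  by_contra! h
  have hin : 0 < ∑ e' with signHead src tgt x e' = signHead src tgt x e, |x e'| :=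
    sum_pos' (fun _ _ => abs_nonneg _) ⟨e, by simp, abs_pos.mpr he⟩
  have hout : ∑ e' with signTail src tgt x e' = signHead src tgt x e, |x e'| = 0 :=
    sum_eq_zero fun e' he' =>
      abs_eq_zero.mpr (not_not.mp fun h' => h e' h' (mem_filter.mp he').2)
  have := hx.sum_abs_signHead_eq (signHead src tgt x e)
  omega

lemma IsFlow.card_signHead_eq (hx : IsFlow src tgt x) (hx1 : ∀ e, x e = -1 ∨ x e = 0 ∨ x e = 1)
    (w : V) :
    #{e | x e ≠ 0 ∧ signHead src tgt x e = w} = #{e | x e ≠ 0 ∧ signTail src tgt x e = w} := by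
  have habs : ∀ e, |x e| = if x e ≠ 0 then 1 else 0 := fun e => by
    rcases hx1 e with h | h | h <;> simp [h]
  have h := hx.sum_abs_signHead_eq w
  simp only [habs, sum_boole, filter_filter] at h
  simpa only [and_comm, Nat.cast_inj] using h

end Flow

section CycleClass

variable [Fintype E] [DecidableEq V] {src tgt : E → V} {x y : E → ℤ}

lemma IsCycleClass.ne_zero_of_sharesVertex (hx : IsCycleClass src tgt x)
    (hy : IsFlow src tgt y) (hyx : ∀ e, y e = 0 ∨ y e = x e) {p q : E} (hp : x p ≠ 0)
    (hq : x q ≠ 0) (hpq : SharesVertex src tgt p q) (hyp : y p ≠ 0) : y q ≠ 0 := by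
  classical
  obtain ⟨-, hxflow, hx1, hhead, -⟩ := hx
  have hy1 : ∀ e, y e = -1 ∨ y e = 0 ∨ y e = 1 := fun e =>
    (hyx e).elim (fun h => .inr (.inl h)) fun h => h ▸ hx1 e
  obtain ⟨w, hpw, hqw⟩ := hpq.exists_common
  set s : Finset E := {e | x e ≠ 0 ∧ signHead src tgt x e = w}
  set t : Finset E := {e | x e ≠ 0 ∧ signTail src tgt x e = w}
  have hs : #s ≤ 1 := card_le_one.mpr fun a ha b hb => by
    simp only [s, mem_filter, ← flowHead_eq_signHead (hx1 _)] at ha hb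
    exact hhead w ha.2 hb.2
  have hys : ({e | y e ≠ 0 ∧ signHead src tgt y e = w} : Finset E) = {e ∈ s | y e ≠ 0} := by
    ext e
    simp only [s, mem_filter, mem_univ, true_and]
    rcases hyx e with h | h
    · simp [h]
    · simp only [signHead, h]
      tauto
  have hyt : ({e | y e ≠ 0 ∧ signTail src tgt y e = w} : Finset E) = {e ∈ t | y e ≠ 0} := by
    ext e
    simp only [t, mem_filter, mem_univ, true_and]
    rcases hyx e with h | h
    · simp [h]
    · simp only [signTail, h]
      tauto
  have hmem : ∀ e, x e ≠ 0 → (src e = w ∨ tgt e = w) → e ∈ s ∪ t := fun e he hew => by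
    simpa [s, t, he] using signHead_eq_or_signTail_eq hew
  refine Finset.imp_of_card_filter_eq (P := fun e => y e ≠ 0) hs
    (hxflow.card_signHead_eq hx1 w) ?_ (hmem p hp hpw) (hmem q hq hqw) hyp
  rw [← hys, ← hyt]
  exact hy.card_signHead_eq hy1 w

lemma IsCycleClass.eq_zero_or_eq (hx : IsCycleClass src tgt x) (hy : IsFlow src tgt y)
    (hyx : ∀ e, y e = 0 ∨ y e = x e) : y = 0 ∨ y = x := by
  by_contra! h
  obtain ⟨p, hp⟩ := Function.ne_iff.mp h.1
  obtain ⟨q, hq⟩ := Function.ne_iff.mp h.2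
  have hxp : x p ≠ 0 := fun h0 => hp (((hyx p).resolve_left hp).trans h0)
  have hyq : y q = 0 := (hyx q).resolve_right hq
  have hxq : x q ≠ 0 := fun h0 => hq (hyq.trans h0.symm)
  have hclosed : ∀ b, Relation.ReflTransGen
      (fun p q => x p ≠ 0 ∧ x q ≠ 0 ∧ SharesVertex src tgt p q) p b → y b ≠ 0 := by
    intro b hb
    induction hb with
    | refl => exact hp
    | tail _ hbc ih => exact hx.ne_zero_of_sharesVertex hy hyx hbc.1 hbc.2.1 hbc.2.2 ih
  exact hclosed q (hx.2.2.2.2 p q hxp hxq) hyq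

end CycleClass

section ClosedWalk

variable [Fintype E] [DecidableEq V] {src tgt : E → V} {x : E → ℤ}

lemma isFlow_of_closedWalk [DecidableEq E] {n : ℕ} {a : ℕ → E} (ha : Set.InjOn a (range n))
    (hxa : ∀ k, x (a k) ≠ 0)
    (hstep : ∀ k, signTail src tgt x (a (k + 1)) = signHead src tgt x (a k))
    (hclose : signTail src tgt x (a n) = signTail src tgt x (a 0)) :
    IsFlow src tgt fun e => if e ∈ (range n).image a then (x e).sign else 0 := by
  intro w
  simp only [ite_mul, zero_mul]
  rw [sum_ite_mem, univ_inter, sum_image ha]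
  simp only [sign_mul_incidence_eq (hxa _), ← hstep]
  rw [sum_range_sub (fun k => if signTail src tgt x (a k) = w then (1 : ℤ) else 0), hclose,
    sub_self]

theorem exists_isCycleClass_of_closedWalk {n : ℕ} (hn : 0 < n) {a : ℕ → E}
    (hxa : ∀ k, x (a k) ≠ 0)
    (hstep : ∀ k, signTail src tgt x (a (k + 1)) = signHead src tgt x (a k))
    (hclose : signTail src tgt x (a n) = signTail src tgt x (a 0))
    (hsimple : ∀ m, Set.InjOn (fun k => signTail src tgt x (a k)) (Set.Ico m (m + n))) :
    ∃ c, IsCycleClass src tgt c ∧ ∀ e, c e ≠ 0 → c e = (x e).sign := by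
  classical
  have ha : Set.InjOn a (range n) := fun k hk l hl h =>
    hsimple 0 (by simpa using hk) (by simpa using hl) (congrArg (signTail src tgt x) h)
  set C := (range n).image a
  set c : E → ℤ := fun e => if e ∈ C then (x e).sign else 0
  have hcC : ∀ e, c e ≠ 0 ↔ e ∈ C := fun e => by
    by_cases he : e ∈ C
    · obtain ⟨k, -, rfl⟩ := mem_image.mp he
      simp [c, he, hxa k]
    · simp [c, he]
  have hcx : ∀ e, c e ≠ 0 → c e = (x e).sign := fun e he => if_pos ((hcC e).mp he)
  have hca : ∀ k < n, c (a k) ≠ 0 := fun k hk =>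
    (hcC _).mpr (mem_image_of_mem a (mem_range.mpr hk))
  have hhead : ∀ k, c (a k) ≠ 0 → flowHead src tgt c (a k) = signTail src tgt x (a (k + 1)) :=
    fun k hk => by simp [hstep, flowHead, signHead, hcx _ hk, Int.sign_eq_one_iff_pos]
  refine ⟨c, ⟨Function.ne_iff.mpr ⟨a 0, hca 0 hn⟩, isFlow_of_closedWalk ha hxa hstep hclose,
    fun e => ?_, fun w e he f hf => ?_, fun e f he hf => ?_⟩, hcx⟩
  · by_cases he : e ∈ C
    · rcases Int.sign_trichotomy (x e) with h | h | h <;> simp [c, he, h]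
    · simp [c, he]
  · obtain ⟨k, hk, rfl⟩ := mem_image.mp ((hcC _).mp he.1)
    obtain ⟨l, hl, rfl⟩ := mem_image.mp ((hcC _).mp hf.1)
    rw [mem_range] at hk hl
    have hkl : k + 1 = l + 1 := hsimple 1 (Set.mem_Ico.mpr ⟨by omega, by omega⟩)
      (Set.mem_Ico.mpr ⟨by omega, by omega⟩)
      ((hhead k he.1).symm.trans (he.2.trans (hf.2.symm.trans (hhead l hf.1))))
    rw [Nat.succ_injective hkl]
  · obtain ⟨k, hk, rfl⟩ := mem_image.mp ((hcC _).mp he)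
    obtain ⟨l, hl, rfl⟩ := mem_image.mp ((hcC _).mp hf)
    exact reflTransGen_of_closedWalk hca hstep (mem_range.mp hk) (mem_range.mp hl)

theorem IsFlow.exists_isCycleClass_conformal [Finite V] (hx : IsFlow src tgt x) (hx0 : x ≠ 0) :
    ∃ c, IsCycleClass src tgt c ∧ ∀ e, c e ≠ 0 → c e = (x e).sign := by
  obtain ⟨e₀, he₀⟩ := Function.ne_iff.mp hx0
  obtain ⟨n, hn, w, hstep, hclose, hsimple⟩ := exists_simple_closed_walk
    (fun e : {e // x e ≠ 0} => signHead src tgt x e) (fun e => signTail src tgt x e)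
    (fun e => (hx.exists_signTail_eq_signHead e.2).elim fun e' he' => ⟨⟨e', he'.1⟩, he'.2⟩)
    ⟨e₀, he₀⟩
  exact exists_isCycleClass_of_closedWalk hn (fun k => (w k).2) hstep hclose hsimple

end ClosedWalk

lemma sum_mul_sub_nonneg_of_conformal [Fintype E] {c x : E → ℤ}
    (hc : ∀ e, c e ≠ 0 → c e = (x e).sign) : 0 ≤ ∑ e, c e * (x e - c e) := by
  refine sum_nonneg fun e _ => ?_
  by_cases h : c e = 0
  · simp [h]
  rw [hc e h]
  rcases lt_trichotomy (x e) 0 with hx | hx | hx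
  · rw [Int.sign_eq_neg_one_of_neg hx]; omega
  · simp [hx]
  · rw [Int.sign_eq_one_of_pos hx]; omega

/-- An element `x ∈ Flow(G)` is irreducible (nonzero, and admitting no decomposition
`x = y + z` with `y, z ∈ Flow(G)` nonzero and `y · z ≥ 0`) if and only if `x` is the class of
an oriented cycle of `G`. -/
theorem flow_irreducible_iff_cycle {V E : Type} [Fintype V] [Fintype E] [DecidableEq V]
    (src tgt : E → V) (x : E → ℤ) (hx : IsFlow src tgt x) :
    (x ≠ 0 ∧ ∀ y z : E → ℤ, IsFlow src tgt y → IsFlow src tgt z → y ≠ 0 → z ≠ 0 →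
        y + z = x → ∑ e, y e * z e < 0) ↔ IsCycleClass src tgt x := by
  constructor
  · rintro ⟨hx0, hirr⟩
    obtain ⟨c, hc, hcx⟩ := hx.exists_isCycleClass_conformal hx0
    by_contra hne
    have hxc : x - c ≠ 0 := sub_ne_zero.mpr fun h => hne (h ▸ hc)
    exact (sum_mul_sub_nonneg_of_conformal hcx).not_gt
      (hirr c (x - c) hc.2.1 (hx.sub hc.2.1) hc.1 hxc (add_sub_cancel c x))
  · intro hcyc
    refine ⟨hcyc.1, fun y z hy hz hy0 hz0 hyz => ?_⟩
    have hle : ∀ e ∈ univ, y e * z e ≤ 0 := fun e _ =>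
      Int.mul_nonpos_of_add_eq (hcyc.2.2.1 e) (congrFun hyz e)
    refine (sum_nonpos hle).lt_of_ne fun hsum => ?_
    have hyx : ∀ e, y e = 0 ∨ y e = x e := fun e => by
      rcases mul_eq_zero.mp ((sum_eq_zero_iff_of_nonpos hle).mp hsum e (mem_univ e)) with h | h
      · exact .inl h
      · exact .inr (by rw [← congrFun hyz e, Pi.add_apply, h, add_zero])
    rcases hcyc.eq_zero_or_eq hy hyx with rfl | rfl
    · exact hy0 rfl
    · exact hz0 (by simpa using hyz)
end

section
/- Let G be a finite connected graph with a fixed orientation, with flow lattice Flow(G) = ker ∂ and cut lattice Cut(G) = im ∂* inside C₁(G;ℤ). If H is an oriented subgraph of G whose class [H] lies in Flow(G) ⊕ Cut(G) ⊆ C₁(G;ℤ), then [H] = [H₁] + [H₂] where H₁ is an oriented Eulerian subgraph (i.e. [H₁] ∈ Flow(G)), H₂ is an oriented cut (i.e. [H₂] ∈ Cut(G)), and H₁ and H₂ have disjoint edge sets. -/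
/-- `x : E → ℤ` is a cut: it lies in `Cut(G) = im ∂* ⊆ C₁(G;ℤ)`. -/
def IsCut {V E : Type} (src tgt : E → V) (x : E → ℤ) : Prop :=
  ∃ z : V → ℤ, ∀ e, x e = z (tgt e) - z (src e)

/-- The graph is connected. -/
def GraphConnected {V E : Type} (src tgt : E → V) : Prop :=
  ∀ v w : V, Relation.ReflTransGen
    (fun a b => ∃ e, (src e = a ∧ tgt e = b) ∨ (src e = b ∧ tgt e = a)) v w

lemma Int.mul_nonpos_of_abs_add_le_one {s t : ℤ} (h : |s + t| ≤ 1) : s * t ≤ 0 := by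
  by_contra! hpos
  rw [abs_le] at h
  rcases pos_and_pos_or_neg_and_neg_of_mul_pos hpos with ⟨hs, ht⟩ | ⟨hs, ht⟩ <;> omega

lemma IsFlow.sum_mul_eq_zero_of_isCut {V E : Type} [Fintype V] [Fintype E] [DecidableEq V]
    {src tgt : E → V} {x y : E → ℤ} (hx : IsFlow src tgt x) (hy : IsCut src tgt y) :
    ∑ e, x e * y e = 0 := by
  obtain ⟨z, hz⟩ := hy
  calc ∑ e, x e * y e
      = ∑ v, z v * ∑ e, x e * ((if tgt e = v then 1 else 0) - (if src e = v then 1 else 0)) := by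
        simp only [hz, Finset.mul_sum, mul_sub, mul_ite, mul_one, mul_zero, Finset.sum_sub_distrib]
        rw [Finset.sum_comm (f := fun v e => if tgt e = v then z v * x e else 0),
          Finset.sum_comm (f := fun v e => if src e = v then z v * x e else 0)]
        simp [mul_comm]
    _ = 0 := Finset.sum_eq_zero fun v _ => by rw [hx v, mul_zero]

theorem flow_cut_decomposition_general {V E : Type} [Fintype V] [Fintype E] [DecidableEq V]
    (src tgt : E → V)
    (x₁ x₂ : E → ℤ) (h₁ : IsFlow src tgt x₁) (h₂ : IsCut src tgt x₂)
    (h : ∀ e, x₁ e + x₂ e = -1 ∨ x₁ e + x₂ e = 0 ∨ x₁ e + x₂ e = 1) :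
    (∀ e, x₁ e = -1 ∨ x₁ e = 0 ∨ x₁ e = 1) ∧
    (∀ e, x₂ e = -1 ∨ x₂ e = 0 ∨ x₂ e = 1) ∧
    (∀ e, x₁ e = 0 ∨ x₂ e = 0) := by
  have hnonpos : ∀ e ∈ Finset.univ, x₁ e * x₂ e ≤ 0 := fun e _ =>
    Int.mul_nonpos_of_abs_add_le_one (by rcases h e with he | he | he <;> simp [he])
  have hdisjoint : ∀ e, x₁ e = 0 ∨ x₂ e = 0 := fun e => mul_eq_zero.mp <|
    (Finset.sum_eq_zero_iff_of_nonpos hnonpos).mp (h₁.sum_mul_eq_zero_of_isCut h₂) e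
      (Finset.mem_univ e)
  refine ⟨fun e => ?_, fun e => ?_, hdisjoint⟩ <;> have := h e <;> have := hdisjoint e <;> omega

/-- Let `G` be a finite connected oriented graph.  If `x₁ ∈ Flow(G)`, `x₂ ∈ Cut(G)`, and
`x₁ + x₂` has all coordinates in `{-1,0,1}` (the class of an oriented subgraph), then `x₁`
and `x₂` have all coordinates in `{-1,0,1}` (an oriented Eulerian subgraph and an oriented
cut, respectively) and they have disjoint supports. -/
theorem flow_cut_decomposition {V E : Type} [Fintype V] [Fintype E] [DecidableEq V]
    (src tgt : E → V) (hconn : GraphConnected src tgt)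
    (x₁ x₂ : E → ℤ) (h₁ : IsFlow src tgt x₁) (h₂ : IsCut src tgt x₂)
    (h : ∀ e, x₁ e + x₂ e = -1 ∨ x₁ e + x₂ e = 0 ∨ x₁ e + x₂ e = 1) :
    (∀ e, x₁ e = -1 ∨ x₁ e = 0 ∨ x₁ e = 1) ∧
    (∀ e, x₂ e = -1 ∨ x₂ e = 0 ∨ x₂ e = 1) ∧
    (∀ e, x₁ e = 0 ∨ x₂ e = 0) :=
  flow_cut_decomposition_general src tgt x₁ x₂ h₁ h₂ h
end

section
/- Let G be a planar graph embedded in S² and let C₁,…,C_n be pairwise nested oriented cycles in G with [C_i]·[C_j] > 0 for all i, j. Then C₁,…,C_n are nested (the disks they bound can be linearly ordered by inclusion) and all n cycles share at least one common edge. -/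
/-- `x` is the oriented boundary of the 2-chain (disk) `D` of faces of the embedding of `G`
in `S²`; `sides e` records the pair of faces to the left and right of the oriented edge `e`. -/
def BoundsDisk {E F : Type} [DecidableEq F] (sides : E → F × F) (D : Finset F)
    (x : E → ℤ) : Prop :=
  ∀ e, x e = (if (sides e).1 ∈ D then 1 else 0) - (if (sides e).2 ∈ D then 1 else 0)

/-- Two cycles, bounding disks `D₁` and `D₂` in `S²`, are *nested* if some choice among
these disks and their complements is ordered by inclusion. -/
def NestedPair {F : Type} [Fintype F] [DecidableEq F] (D₁ D₂ : Finset F) : Prop :=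
  D₁ ⊆ D₂ ∨ D₂ ⊆ D₁ ∨ D₁ ⊆ D₂ᶜ ∨ D₂ᶜ ⊆ D₁

/-! A positive pairing rules out the two "outward" cases of nestedness, so the disks form a
chain under inclusion. Any edge shared by the smallest and the largest disk of the chain separates
a face inside the smallest disk from a face outside the largest one, so it lies on every cycle. -/

theorem BoundsDisk.compl {E F : Type} [Fintype F] [DecidableEq F] {sides : E → F × F}
    {D : Finset F} {x : E → ℤ} (h : BoundsDisk sides D x) : BoundsDisk sides Dᶜ (-x) := by
  intro e
  rw [Pi.neg_apply, h e]
  by_cases h₁ : (sides e).1 ∈ D <;> by_cases h₂ : (sides e).2 ∈ D <;> simp [h₁, h₂]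

theorem BoundsDisk.mul_nonpos_of_disjoint {E F : Type} [DecidableEq F] {sides : E → F × F}
    {D₁ D₂ : Finset F} {x₁ x₂ : E → ℤ} (h₁ : BoundsDisk sides D₁ x₁)
    (h₂ : BoundsDisk sides D₂ x₂) (hD : Disjoint D₁ D₂) (e : E) : x₁ e * x₂ e ≤ 0 := by
  have hf : (sides e).1 ∈ D₁ → (sides e).1 ∉ D₂ := fun h => Finset.disjoint_left.mp hD h
  have hg : (sides e).2 ∈ D₁ → (sides e).2 ∉ D₂ := fun h => Finset.disjoint_left.mp hD h
  rw [h₁ e, h₂ e]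
  by_cases a : (sides e).1 ∈ D₁ <;> by_cases b : (sides e).2 ∈ D₁ <;>
    by_cases c : (sides e).1 ∈ D₂ <;> by_cases d : (sides e).2 ∈ D₂ <;> simp_all

theorem BoundsDisk.sum_mul_nonpos_of_disjoint {E F : Type} [Fintype E] [DecidableEq F]
    {sides : E → F × F} {D₁ D₂ : Finset F} {x₁ x₂ : E → ℤ} (h₁ : BoundsDisk sides D₁ x₁)
    (h₂ : BoundsDisk sides D₂ x₂) (hD : Disjoint D₁ D₂) : ∑ e, x₁ e * x₂ e ≤ 0 :=
  Finset.sum_nonpos fun e _ => h₁.mul_nonpos_of_disjoint h₂ hD e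

theorem BoundsDisk.subset_or_subset_of_nestedPair {E F : Type} [Fintype E] [Fintype F]
    [DecidableEq F] {sides : E → F × F} {D₁ D₂ : Finset F} {x₁ x₂ : E → ℤ}
    (h₁ : BoundsDisk sides D₁ x₁) (h₂ : BoundsDisk sides D₂ x₂) (hD : NestedPair D₁ D₂)
    (hpos : 0 < ∑ e, x₁ e * x₂ e) : D₁ ⊆ D₂ ∨ D₂ ⊆ D₁ := by
  rcases hD with hD | hD | hD | hD
  · exact Or.inl hD
  · exact Or.inr hD
  · have := h₁.sum_mul_nonpos_of_disjoint h₂ (Finset.subset_compl_iff_disjoint_right.mp hD)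
    omega
  · have := h₁.compl.sum_mul_nonpos_of_disjoint h₂.compl
      (Finset.subset_compl_iff_disjoint_right.mp (by rwa [compl_compl, compl_le_iff_compl_le]))
    simp only [Pi.neg_apply, neg_mul_neg] at this
    omega

theorem BoundsDisk.apply_ne_zero_of_subset_of_subset {E F : Type} [DecidableEq F]
    {sides : E → F × F} {A B C : Finset F} {a b c : E → ℤ} (hA : BoundsDisk sides A a)
    (hB : BoundsDisk sides B b) (hC : BoundsDisk sides C c) (hAC : A ⊆ C) (hCB : C ⊆ B)
    {e : E} (ha : a e ≠ 0) (hb : b e ≠ 0) : c e ≠ 0 := by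
  have hf₁ := @hAC (sides e).1
  have hf₂ := @hCB (sides e).1
  have hg₁ := @hAC (sides e).2
  have hg₂ := @hCB (sides e).2
  rw [hA e] at ha
  rw [hB e] at hb
  rw [hC e]
  by_cases p : (sides e).1 ∈ A <;> by_cases q : (sides e).2 ∈ A <;>
    by_cases r : (sides e).1 ∈ B <;> by_cases s : (sides e).2 ∈ B <;>
    by_cases t : (sides e).1 ∈ C <;> by_cases u : (sides e).2 ∈ C <;> simp_all

theorem Finset.exists_perm_monotone_of_subset_total {α : Type*} {n : ℕ} (s : Fin n → Finset α)
    (h : ∀ i j, s i ⊆ s j ∨ s j ⊆ s i) : ∃ σ : Equiv.Perm (Fin n), Monotone (s ∘ σ) := by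
  refine ⟨Tuple.sort fun i => (s i).card, fun i j hij => ?_⟩
  have hcard := Tuple.monotone_sort (fun i => (s i).card) hij
  exact (h _ _).elim id fun hji => (Finset.eq_of_subset_of_card_le hji hcard).ge

theorem nested_cycles_common_edge_general {E F : Type}
    [Fintype E] [Fintype F] [DecidableEq F]
    (sides : E → F × F) {n : ℕ} (hn : 0 < n)
    (x : Fin n → E → ℤ) (D : Fin n → Finset F)
    (hbd : ∀ i, BoundsDisk sides (D i) (x i))
    (hnested : ∀ i j, NestedPair (D i) (D j))
    (hpos : ∀ i j, 0 < ∑ e, x i e * x j e) :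
    (∃ (σ : Equiv.Perm (Fin n)) (D' : Fin n → Finset F),
        (∀ i, D' i = D i ∨ D' i = (D i)ᶜ) ∧
        ∀ i j : Fin n, i ≤ j → D' (σ i) ⊆ D' (σ j)) ∧
    ∃ e : E, ∀ i, x i e ≠ 0 := by
  obtain ⟨σ, hσ⟩ := Finset.exists_perm_monotone_of_subset_total D fun i j =>
    (hbd i).subset_or_subset_of_nestedPair (hbd j) (hnested i j) (hpos i j)
  refine ⟨⟨σ, D, fun i => Or.inl rfl, fun i j hij => hσ hij⟩, ?_⟩
  obtain ⟨m, rfl⟩ := Nat.exists_eq_add_one_of_ne_zero hn.ne'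
  obtain ⟨e, -, he⟩ := Finset.exists_ne_zero_of_sum_ne_zero (hpos (σ 0) (σ (Fin.last m))).ne'
  obtain ⟨hmin, hmax⟩ := mul_ne_zero_iff.mp he
  refine ⟨e, fun i => (hbd _).apply_ne_zero_of_subset_of_subset (hbd _) (hbd i) ?_ ?_ hmin hmax⟩
  · simpa using hσ (Fin.zero_le (σ.symm i))
  · simpa using hσ (Fin.le_last (σ.symm i))

/-- (Helly property for cycles in a planar graph.)  Let `G` be a planar graph embedded in
`S²` and let `C₁,…,Cₙ` be pairwise nested oriented cycles with `[Cᵢ]·[Cⱼ] > 0` for all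
`i, j`.  Then `C₁,…,Cₙ` are nested: (a suitable choice of) the disks they bound can be
linearly ordered by inclusion, and all `n` cycles share at least one common edge. -/
theorem nested_cycles_common_edge {V E F : Type}
    [Fintype V] [Fintype E] [Fintype F] [DecidableEq V] [DecidableEq F]
    (src tgt : E → V) (sides : E → F × F) {n : ℕ} (hn : 0 < n)
    (x : Fin n → E → ℤ) (D : Fin n → Finset F)
    (hcyc : ∀ i, IsCycleClass src tgt (x i))
    (hbd : ∀ i, BoundsDisk sides (D i) (x i))
    (hnested : ∀ i j, NestedPair (D i) (D j))
    (hpos : ∀ i j, 0 < ∑ e, x i e * x j e) :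
    (∃ (σ : Equiv.Perm (Fin n)) (D' : Fin n → Finset F),
        (∀ i, D' i = D i ∨ D' i = (D i)ᶜ) ∧
        ∀ i j : Fin n, i ≤ j → D' (σ i) ⊆ D' (σ j)) ∧
    ∃ e : E, ∀ i, x i e ≠ 0 :=
  nested_cycles_common_edge_general sides hn x D hbd hnested hpos
end
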